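/- The free product F * G of a finitely generated free monoid F of rank r and a finite group G is quasi-isometric to a free monoid of rank r|G|. -/

import Mathlib

/-!
Every element of `FreeMonoid α ∗ G` has a unique normal form `g₁ a₁ ⋯ gₙ aₙ g` with `gᵢ, g ∈ G`
and `aᵢ ∈ α`; sending it to the word `(g₁, a₁) ⋯ (gₙ, aₙ)` over `G × α` is onto. Right
multiplication by a letter `a` appends the single letter `(g, a)` to this word, and right
multiplication by an element of `G` does not change it, so the map is `1`-Lipschitz. Conversely,
appending a letter `(k, a)` costs the two generators `g⁻¹k` and `a`, and one more generator of `G`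
fixes the final `g` at the end, so word distances in the free product are at most `2d + 1`.
-/

open scoped ENNReal NNReal

def IsSemimetric {X : Type*} (d : X → X → ℝ≥0∞) : Prop :=
  (∀ x y, d x y = 0 ↔ x = y) ∧ ∀ x y z, d x z ≤ d x y + d y z

noncomputable def wordDist {M : Type*} [Monoid M] (S : Set M) (x y : M) : ℝ≥0∞ :=
  sInf {n : ℝ≥0∞ | ∃ w : List M, (∀ s ∈ w, s ∈ S) ∧ x * w.prod = y ∧ n = w.length}

noncomputable def setDist {X : Type*} (d : X → X → ℝ≥0∞) (A B : Set X) : ℝ≥0∞ :=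
  ⨅ a ∈ A, ⨅ b ∈ B, d a b

section WordDist

variable {M N : Type*} [Monoid M] [Monoid N] {S : Set M} {x y : M}

theorem le_wordDist_iff {n : ℝ≥0∞} :
    n ≤ wordDist S x y ↔
      ∀ w : List M, (∀ s ∈ w, s ∈ S) → x * w.prod = y → n ≤ w.length := by
  simp only [wordDist, le_sInf_iff, Set.mem_ofPred_eq]
  constructor
  · intro h w hw hxy
    exact h _ ⟨w, hw, hxy, rfl⟩
  · rintro h _ ⟨w, hw, hxy, rfl⟩
    exact h w hw hxy

theorem wordDist_le_length (w : List M) (hw : ∀ s ∈ w, s ∈ S) (hxy : x * w.prod = y) :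
    wordDist S x y ≤ w.length :=
  sInf_le ⟨w, hw, hxy, rfl⟩

theorem wordDist_self (S : Set M) (x : M) : wordDist S x x = 0 :=
  nonpos_iff_eq_zero.mp <| by simpa using wordDist_le_length (S := S) (x := x) [] (by simp) rfl

theorem exists_prod_eq_of_wordDist_ne_top (h : wordDist S x y ≠ ⊤) :
    ∃ w : List M, (∀ s ∈ w, s ∈ S) ∧ x * w.prod = y := by
  by_contra! hne
  exact h (top_le_iff.mp (le_wordDist_iff.mpr fun w hw hxy => (hne w hw hxy).elim))

theorem wordDist_image_le (f : M →* N) (S : Set M) (x y : M) :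
    wordDist (f '' S) (f x) (f y) ≤ wordDist S x y := by
  refine le_wordDist_iff.mpr fun w hw hxy => ?_
  simpa using wordDist_le_length (w.map f) (by simpa using fun s hs => ⟨s, hw s hs, rfl⟩)
    (by rw [← hxy, map_mul, map_list_prod])

theorem wordDist_image_mulEquiv (φ : M ≃* N) (S : Set M) (x y : M) :
    wordDist (φ '' S) (φ x) (φ y) = wordDist S x y := by
  refine le_antisymm (wordDist_image_le φ.toMonoidHom S x y) ?_
  simpa [Set.image_image] using wordDist_image_le φ.symm.toMonoidHom (φ '' S) (φ x) (φ y)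

theorem closure_image_mulEquiv_eq_top (φ : M ≃* N) (hS : Submonoid.closure S = ⊤) :
    Submonoid.closure (φ '' S) = ⊤ := by
  rw [← MonoidHom.map_mclosure, hS, ← MonoidHom.mrange_eq_map, MonoidHom.mrange_eq_top]
  exact φ.surjective

end WordDist

namespace FreeMonoid

variable {β : Type*}

theorem length_prod_of_forall_mem_range_of (w : List (FreeMonoid β))
    (hw : ∀ s ∈ w, s ∈ Set.range (of (α := β))) : w.prod.length = w.length := by
  induction w with
  | nil => rfl
  | cons s t ih =>
    obtain ⟨b, rfl⟩ := hw s List.mem_cons_self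
    rw [List.prod_cons, length_mul, length_of, ih fun s hs => hw s (List.mem_cons_of_mem _ hs),
      List.length_cons, add_comm]

theorem prod_map_of_toList (c : FreeMonoid β) : (c.toList.map of).prod = c := by
  induction c using FreeMonoid.recOn with
  | one => rfl
  | of_mul b c ih => simp [ih]

theorem wordDist_range_of_self_mul (a c : FreeMonoid β) :
    wordDist (Set.range of) a (a * c) = c.length := by
  refine le_antisymm ?_ (le_wordDist_iff.mpr fun w hw hw_prod => ?_)
  · simpa [length] using wordDist_le_length (S := Set.range of) (c.toList.map of) (by simp)
      (by rw [prod_map_of_toList])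
  · rw [← mul_left_cancel hw_prod, length_prod_of_forall_mem_range_of w hw]

theorem exists_eq_mul_of_wordDist_range_of_ne_top {a b : FreeMonoid β}
    (h : wordDist (Set.range of) a b ≠ ⊤) : ∃ c, b = a * c := by
  obtain ⟨w, -, hw⟩ := exists_prod_eq_of_wordDist_ne_top h
  exact ⟨w.prod, hw.symm⟩

end FreeMonoid

namespace Monoid.Coprod

open FreeMonoid

variable {α G : Type*}

section Monoid

variable [Monoid G]

def mulHeadNormalForm (h : G) : List (G × α) × G → List (G × α) × G
  | ([], g) => ([], h * g)
  | ((k, a) :: t, g) => ((h * k, a) :: t, g)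

def mulHeadNormalFormHom : G →* Function.End (List (G × α) × G) where
  toFun := mulHeadNormalForm
  map_one' := by
    funext s
    rcases s with ⟨_ | ⟨⟨k, a⟩, t⟩, g⟩ <;> simp [mulHeadNormalForm] <;> rfl
  map_mul' h h' := by
    funext s
    rcases s with ⟨_ | ⟨⟨k, a⟩, t⟩, g⟩ <;> simp [mulHeadNormalForm, mul_assoc] <;> rfl

/-- `FreeMonoid α ∗ G` acts on the left of the normal forms `([(g₁, a₁), …, (gₙ, aₙ)], g)`,
which stand for `g₁ a₁ ⋯ gₙ aₙ g`. -/
def normalFormAction : FreeMonoid α ∗ G →* Function.End (List (G × α) × G) :=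
  lift (FreeMonoid.lift fun a s => ((1, a) :: s.1, s.2)) mulHeadNormalFormHom

theorem normalFormAction_one_apply (s : List (G × α) × G) : normalFormAction 1 s = s := by
  rw [map_one]; rfl

theorem normalFormAction_mul_apply (x y : FreeMonoid α ∗ G) (s : List (G × α) × G) :
    normalFormAction (x * y) s = normalFormAction x (normalFormAction y s) := by
  rw [map_mul]; rfl

theorem normalFormAction_inl_of_apply (a : α) (s : List (G × α) × G) :
    normalFormAction (inl (of a) : FreeMonoid α ∗ G) s = ((1, a) :: s.1, s.2) := rfl

theorem normalFormAction_inr_apply (h : G) (s : List (G × α) × G) :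
    normalFormAction (inr h : FreeMonoid α ∗ G) s = mulHeadNormalForm h s := rfl

def normalForm (x : FreeMonoid α ∗ G) : List (G × α) × G := normalFormAction x ([], 1)

def ofNormalForm (s : List (G × α) × G) : FreeMonoid α ∗ G :=
  (s.1.map fun p => inr p.1 * inl (of p.2)).prod * inr s.2

theorem ofNormalForm_normalFormAction (x : FreeMonoid α ∗ G) (s : List (G × α) × G) :
    ofNormalForm (normalFormAction x s) = x * ofNormalForm s := by
  induction x using induction_on generalizing s with
  | inl m =>
    induction m using FreeMonoid.recOn generalizing s with
    | one => simp [normalFormAction_one_apply]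
    | of_mul a m ih =>
      rw [map_mul, normalFormAction_mul_apply, normalFormAction_inl_of_apply, mul_assoc, ← ih]
      simp [ofNormalForm, mul_assoc]
  | inr h =>
    rcases s with ⟨_ | ⟨⟨k, a⟩, t⟩, g⟩ <;>
      simp [normalFormAction_inr_apply, mulHeadNormalForm, ofNormalForm, mul_assoc]
  | mul x y ihx ihy => rw [normalFormAction_mul_apply, ihx, ihy, mul_assoc]

theorem ofNormalForm_normalForm (x : FreeMonoid α ∗ G) : ofNormalForm (normalForm x) = x := by
  rw [normalForm, ofNormalForm_normalFormAction]
  simp [ofNormalForm]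

theorem normalFormAction_prod_map (u : List (G × α)) (s : List (G × α) × G) :
    normalFormAction (u.map fun p => inr p.1 * inl (of p.2)).prod s = (u ++ s.1, s.2) := by
  induction u with
  | nil => simp [normalFormAction_one_apply]
  | cons p t ih =>
    simp [normalFormAction_mul_apply, ih, normalFormAction_inl_of_apply,
      normalFormAction_inr_apply, mulHeadNormalForm]

theorem normalForm_ofNormalForm (s : List (G × α) × G) : normalForm (ofNormalForm s) = s := by
  simp [normalForm, ofNormalForm, normalFormAction_mul_apply, normalFormAction_inr_apply,
    mulHeadNormalForm, normalFormAction_prod_map]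

theorem normalForm_injective : Function.Injective (normalForm (α := α) (G := G)) :=
  Function.LeftInverse.injective ofNormalForm_normalForm

theorem normalForm_mul_inr (x : FreeMonoid α ∗ G) (h : G) :
    normalForm (x * inr h) = ((normalForm x).1, (normalForm x).2 * h) := by
  conv_lhs => rw [← ofNormalForm_normalForm x]
  rw [← normalForm_ofNormalForm ((normalForm x).1, (normalForm x).2 * h)]
  simp [ofNormalForm, mul_assoc]

theorem normalForm_mul_inl_of (x : FreeMonoid α ∗ G) (a : α) :
    normalForm (x * inl (of a)) = ((normalForm x).1 ++ [((normalForm x).2, a)], 1) := by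
  conv_lhs => rw [← ofNormalForm_normalForm x]
  rw [← normalForm_ofNormalForm ((normalForm x).1 ++ [((normalForm x).2, a)], 1)]
  simp [ofNormalForm, mul_assoc]

variable (α G) in
def generators : Set (FreeMonoid α ∗ G) := inl '' Set.range of ∪ Set.range inr

theorem inl_of_mem_generators (a : α) : (inl (of a) : FreeMonoid α ∗ G) ∈ generators α G :=
  Or.inl ⟨of a, ⟨a, rfl⟩, rfl⟩

theorem inr_mem_generators (h : G) : (inr h : FreeMonoid α ∗ G) ∈ generators α G :=
  Or.inr ⟨h, rfl⟩

theorem generators_finite [Finite α] [Finite G] : (generators α G).Finite :=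
  ((Set.finite_range of).image _).union (Set.finite_range _)

theorem closure_generators : Submonoid.closure (generators α G) = ⊤ := by
  rw [generators, Submonoid.closure_union, ← MonoidHom.map_mclosure, closure_range_of,
    ← MonoidHom.mrange_eq_map, ← MonoidHom.coe_mrange, Submonoid.closure_eq,
    mrange_inl_sup_mrange_inr]

def normalWord (x : FreeMonoid α ∗ G) : FreeMonoid (G × α) := ofList (normalForm x).1

theorem normalWord_surjective : Function.Surjective (normalWord (α := α) (G := G)) :=
  fun c => ⟨ofNormalForm (c.toList, 1), by simp [normalWord, normalForm_ofNormalForm]⟩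

theorem exists_normalWord_mul_eq_of_mem_generators (x : FreeMonoid α ∗ G) {s : FreeMonoid α ∗ G}
    (hs : s ∈ generators α G) : ∃ d, normalWord (x * s) = normalWord x * d ∧ d.length ≤ 1 := by
  rcases hs with ⟨_, ⟨a, rfl⟩, rfl⟩ | ⟨h, rfl⟩
  · exact ⟨of ((normalForm x).2, a), by simp [normalWord, normalForm_mul_inl_of], le_rfl⟩
  · exact ⟨1, by simp [normalWord, normalForm_mul_inr], zero_le_one⟩

theorem exists_normalWord_mul_prod_eq (w : List (FreeMonoid α ∗ G))
    (hw : ∀ s ∈ w, s ∈ generators α G) (x : FreeMonoid α ∗ G) :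
    ∃ c, normalWord (x * w.prod) = normalWord x * c ∧ c.length ≤ w.length := by
  induction w generalizing x with
  | nil => exact ⟨1, by simp, by simp⟩
  | cons s w ih =>
    obtain ⟨d, hd, hd_len⟩ := exists_normalWord_mul_eq_of_mem_generators x (hw s (by simp))
    obtain ⟨c, hc, hc_len⟩ := ih (fun t ht => hw t (by simp [ht])) (x * s)
    refine ⟨d * c, ?_, ?_⟩
    · rw [List.prod_cons, ← mul_assoc, hc, hd, mul_assoc]
    · rw [length_mul, List.length_cons]
      omega

theorem wordDist_normalWord_le (x y : FreeMonoid α ∗ G) :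
    wordDist (Set.range of) (normalWord x) (normalWord y) ≤ wordDist (generators α G) x y := by
  refine le_wordDist_iff.mpr fun w hw hxy => ?_
  obtain ⟨c, hc, hc_len⟩ := exists_normalWord_mul_prod_eq w hw x
  rw [← hxy, hc, wordDist_range_of_self_mul]
  exact_mod_cast hc_len

end Monoid

section Group

variable [Group G]

theorem eq_mul_inr_of_normalWord_eq {x y : FreeMonoid α ∗ G} (h : normalWord y = normalWord x) :
    y = x * inr ((normalForm x).2⁻¹ * (normalForm y).2) := by
  refine normalForm_injective (Prod.ext ?_ ?_)
  · rw [normalForm_mul_inr]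
    exact ofList.injective h
  · rw [normalForm_mul_inr, mul_inv_cancel_left]

theorem exists_generators_prod_eq_of_normalWord_eq_mul (c : FreeMonoid (G × α))
    {x y : FreeMonoid α ∗ G} (hxy : normalWord y = normalWord x * c) :
    ∃ w : List (FreeMonoid α ∗ G),
      (∀ s ∈ w, s ∈ generators α G) ∧ x * w.prod = y ∧ w.length ≤ 2 * c.length + 1 := by
  induction c using FreeMonoid.recOn generalizing x with
  | one =>
    exact ⟨[inr _], List.forall_mem_singleton.mpr (inr_mem_generators _),
      (eq_mul_inr_of_normalWord_eq (by simpa using hxy)).symm, by simp⟩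
  | of_mul p c ih =>
    -- first move the `G`-part of `x` to `p.1`, then append the letter `p.2`
    set x' := x * inr ((normalForm x).2⁻¹ * p.1) * inl (of p.2)
    have hx' : normalWord x' = normalWord x * of p := by
      rw [normalWord, normalForm_mul_inl_of, normalForm_mul_inr, mul_inv_cancel_left, ofList_append,
        ofList_singleton, normalWord]
    obtain ⟨w, hw, hw_prod, hw_len⟩ := ih (x := x') (by rw [hx', mul_assoc, hxy])
    refine ⟨inr ((normalForm x).2⁻¹ * p.1) :: inl (of p.2) :: w, ?_, ?_, ?_⟩
    · exact List.forall_mem_cons.mpr ⟨inr_mem_generators _,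
        List.forall_mem_cons.mpr ⟨inl_of_mem_generators _, hw⟩⟩
    · simpa [x', mul_assoc] using hw_prod
    · simp only [List.length_cons, length_mul, length_of]
      omega

theorem wordDist_le_two_mul_wordDist_normalWord_add_one (x y : FreeMonoid α ∗ G) :
    wordDist (generators α G) x y ≤
      2 * wordDist (Set.range of) (normalWord x) (normalWord y) + 1 := by
  by_cases htop : wordDist (Set.range of) (normalWord x) (normalWord y) = ⊤
  · simp [htop]
  obtain ⟨c, hc⟩ := exists_eq_mul_of_wordDist_range_of_ne_top htop
  obtain ⟨w, hw, hw_prod, hw_len⟩ := exists_generators_prod_eq_of_normalWord_eq_mul c hc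
  calc wordDist (generators α G) x y ≤ w.length := wordDist_le_length w hw hw_prod
    _ ≤ 2 * c.length + 1 := by exact_mod_cast hw_len
    _ = 2 * wordDist (Set.range of) (normalWord x) (normalWord y) + 1 := by
      rw [hc, wordDist_range_of_self_mul]

end Group

end Monoid.Coprod

open Monoid.Coprod FreeMonoid in
theorem stmt_18 (r : ℕ) (G : Type*) [Group G] [Finite G] :
    ∃ (S : Set (Monoid.Coprod (FreeMonoid (Fin r)) G))
      (S' : Set (FreeMonoid (Fin (r * Nat.card G)))),
      S.Finite ∧ Submonoid.closure S = ⊤ ∧ S'.Finite ∧ Submonoid.closure S' = ⊤ ∧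
      ∃ (f : Monoid.Coprod (FreeMonoid (Fin r)) G → FreeMonoid (Fin (r * Nat.card G)))
        (lam eps mu : ℝ≥0), 1 ≤ lam ∧ 0 < eps ∧ 1 ≤ mu ∧
        (∀ x y, wordDist S x y / (lam : ℝ≥0∞) - (eps : ℝ≥0∞) ≤ wordDist S' (f x) (f y) ∧
          wordDist S' (f x) (f y) ≤ (lam : ℝ≥0∞) * wordDist S x y + (eps : ℝ≥0∞)) ∧
        ∀ z, ∃ x, wordDist S' (f x) z ≤ (mu : ℝ≥0∞) ∧ wordDist S' z (f x) ≤ (mu : ℝ≥0∞) := by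
  obtain ⟨e⟩ : Nonempty (G × Fin r ≃ Fin (r * Nat.card G)) :=
    ⟨Finite.equivFinOfCardEq (by rw [Nat.card_prod, Nat.card_fin, mul_comm])⟩
  set φ := freeMonoidCongr e
  refine ⟨generators (Fin r) G, φ '' Set.range of, generators_finite, closure_generators,
    (Set.finite_range of).image φ, closure_image_mulEquiv_eq_top φ closure_range_of,
    φ ∘ normalWord, 2, 1, 1, one_le_two, one_pos, le_rfl, fun x y => ?_, fun z => ?_⟩
  · simp only [Function.comp_apply, wordDist_image_mulEquiv, ENNReal.coe_ofNat, ENNReal.coe_one]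
    have h_le := wordDist_normalWord_le x y
    have h_ge := wordDist_le_two_mul_wordDist_normalWord_add_one x y
    constructor
    · rw [tsub_le_iff_right, ENNReal.div_le_iff two_ne_zero ENNReal.ofNat_ne_top]
      calc _ ≤ 2 * wordDist (Set.range of) (normalWord x) (normalWord y) + 1 := h_ge
        _ ≤ _ := by rw [add_mul, mul_comm, one_mul]; gcongr; norm_num
    · calc _ ≤ wordDist (generators (Fin r) G) x y := h_le
        _ ≤ _ := le_add_right (le_mul_of_one_le_left' one_le_two)
  · obtain ⟨x, rfl⟩ := (φ.surjective.comp normalWord_surjective) z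
    exact ⟨x, by simp [wordDist_self]⟩
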